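/- arXiv:1407.1258 — 4 statements merged into one kernel-verified Lean document; each statement's English description precedes it below -/
import Mathlib

section
/- Let C ≠ 0 and a ≠ 0 be real constants and set f(u) = C·exp(4au). Let u(t,x) be a smooth real-valued solution of the gKN equation with f, such that u_x(t,x) ≠ 0 for all (t,x). Then the function P(t,x) = 1 + 3at·u_t(t,x) + ax·u_x(t,x) satisfies the symmetry determining equation ∂_t P − ∂_x³ P + 3(u_xx/u_x)∂_x² P − (3/2)(u_xx²/u_x²)∂_x P + (f(u)/u_x²)∂_x P − (f'(u)/u_x)P = 0 at every point (t,x). (This is the point symmetry X_{3a} = −3at∂_t − ax∂_x + ∂_u of the gKN equation.) -/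
open Real

/-- Partial derivative with respect to the second (spatial) variable. -/
noncomputable def pdx (u : ℝ → ℝ → ℝ) : ℝ → ℝ → ℝ := fun t x => deriv (fun y => u t y) x

/-- Partial derivative with respect to the first (time) variable. -/
noncomputable def pdt (u : ℝ → ℝ → ℝ) : ℝ → ℝ → ℝ := fun t x => deriv (fun s => u s x) t

/-- `u` solves the generalized Krichever-Novikov equation with nonlinearity `f`:
`u_t = u_xxx - (3/2) u_xx^2/u_x + f(u)/u_x`. -/
def isGKN (f : ℝ → ℝ) (u : ℝ → ℝ → ℝ) : Prop :=
  ∀ t x, pdt u t x =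
    pdx (pdx (pdx u)) t x - (3/2) * (pdx (pdx u) t x)^2 / pdx u t x + f (u t x) / pdx u t x

/-- The symmetry determining equation for a characteristic function `P` along `u`:
`∂_t P - ∂_x^3 P + 3 (u_xx/u_x) ∂_x^2 P - (3/2)(u_xx^2/u_x^2) ∂_x P + (f(u)/u_x^2) ∂_x P
 - (f'(u)/u_x) P = 0`. -/
def symmDet (f : ℝ → ℝ) (u P : ℝ → ℝ → ℝ) : Prop :=
  ∀ t x,
    pdt P t x - pdx (pdx (pdx P)) t x
      + 3 * (pdx (pdx u) t x / pdx u t x) * pdx (pdx P) t x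
      - (3/2) * ((pdx (pdx u) t x)^2 / (pdx u t x)^2) * pdx P t x
      + (f (u t x) / (pdx u t x)^2) * pdx P t x
      - (deriv f (u t x) / pdx u t x) * P t x = 0

/-!
Write `L` for the operator of `symmDet` and `E` for `u_t` minus the right-hand side of the gKN
equation, so that `E ≡ 0` along a solution. Because the equation is autonomous, `L[u_x] = ∂_x E`
and `L[u_t] = ∂_t E` (the latter by symmetry of mixed partials): the translation characteristics
`u_x` and `u_t` satisfy the determining equation for every `f`. By the product rule,
`L[1 + 3at·u_t + ax·u_x] = 3at·L[u_t] + ax·L[u_x] + 3a·E + (4a·f(u) - f'(u))/u_x`,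
and the last term vanishes because `f = C·exp(4au)` satisfies `f' = 4a·f`.
-/

open scoped ContDiff
open Function (uncurry)

section PartialDerivatives

variable {G : ℝ → ℝ → ℝ}

theorem hasDerivAt_pdx (hG : Differentiable ℝ (uncurry G)) (t x : ℝ) :
    HasDerivAt (fun y => G t y) (pdx G t x) x :=
  ((hG (t, x)).hasFDerivAt.comp_hasDerivAt x
    ((hasDerivAt_const x t).prodMk (hasDerivAt_id x))).differentiableAt.hasDerivAt

theorem hasDerivAt_pdt (hG : Differentiable ℝ (uncurry G)) (t x : ℝ) :
    HasDerivAt (fun s => G s x) (pdt G t x) t := by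
  have h := (hG (t, x)).hasFDerivAt.comp_hasDerivAt t
    ((hasDerivAt_id' t).prodMk (hasDerivAt_const t x))
  exact h.differentiableAt.hasDerivAt

theorem uncurry_pdx (hG : Differentiable ℝ (uncurry G)) :
    uncurry (pdx G) = fun p => fderiv ℝ (uncurry G) p (0, 1) := by
  funext ⟨t, x⟩
  exact ((hG (t, x)).hasFDerivAt.comp_hasDerivAt x
    ((hasDerivAt_const x t).prodMk (hasDerivAt_id x))).deriv

theorem uncurry_pdt (hG : Differentiable ℝ (uncurry G)) :
    uncurry (pdt G) = fun p => fderiv ℝ (uncurry G) p (1, 0) := by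
  funext ⟨t, x⟩
  exact ((hG (t, x)).hasFDerivAt.comp_hasDerivAt t
    ((hasDerivAt_id t).prodMk (hasDerivAt_const t x))).deriv

variable (hG : ContDiff ℝ ∞ (uncurry G))
include hG

theorem contDiff_pdx : ContDiff ℝ ∞ (uncurry (pdx G)) := by
  rw [uncurry_pdx (hG.differentiable (by simp))]
  exact (hG.fderiv_right (by simp)).clm_apply contDiff_const

theorem contDiff_pdt : ContDiff ℝ ∞ (uncurry (pdt G)) := by
  rw [uncurry_pdt (hG.differentiable (by simp))]
  exact (hG.fderiv_right (by simp)).clm_apply contDiff_const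

theorem pdt_pdx_comm : pdt (pdx G) = pdx (pdt G) := by
  funext t x
  have hD : Differentiable ℝ (fderiv ℝ (uncurry G)) :=
    (hG.fderiv_right (m := ∞) (by simp)).differentiable (by simp)
  have hdx : Differentiable ℝ (uncurry (pdx G)) := (contDiff_pdx hG).differentiable (by simp)
  have hdt : Differentiable ℝ (uncurry (pdt G)) := (contDiff_pdt hG).differentiable (by simp)
  change uncurry (pdt (pdx G)) (t, x) = uncurry (pdx (pdt G)) (t, x)
  rw [uncurry_pdt hdx, uncurry_pdx hdt, uncurry_pdx (hG.differentiable (by simp)),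
    uncurry_pdt (hG.differentiable (by simp))]
  beta_reduce
  rw [fderiv_clm_apply (hD _) (differentiableAt_const _),
    fderiv_clm_apply (hD _) (differentiableAt_const _)]
  simpa using hG.contDiffAt.isSymmSndFDerivAt (by simpa using ENat.LEInfty.out) (1, 0) (0, 1)

end PartialDerivatives

theorem HasDerivAt.gknRhs {f v v₁ v₂ v₃ : ℝ → ℝ} {f' v' v₁' v₂' v₃' s : ℝ}
    (hf : HasDerivAt f f' (v s)) (hv : HasDerivAt v v' s) (hv₁ : HasDerivAt v₁ v₁' s)
    (hv₂ : HasDerivAt v₂ v₂' s) (hv₃ : HasDerivAt v₃ v₃' s) (h₁ : v₁ s ≠ 0) :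
    HasDerivAt (fun r => v₃ r - 3 / 2 * v₂ r ^ 2 / v₁ r + f (v r) / v₁ r)
      (v₃' - 3 / 2 * (2 * v₂ s * v₂' * v₁ s - v₂ s ^ 2 * v₁') / v₁ s ^ 2
        + (f' * v' * v₁ s - f (v s) * v₁') / v₁ s ^ 2) s :=
  ((hv₃.sub (((hv₂.fun_pow 2).const_mul (3 / 2)).div hv₁ h₁)).add
    ((hf.comp s hv).div hv₁ h₁)).congr_deriv (by rw [Function.comp_apply]; field_simp; ring)

section TranslationSymmetries

variable {f : ℝ → ℝ} {u : ℝ → ℝ → ℝ} (hf : Differentiable ℝ f)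
  (hu : ContDiff ℝ ∞ (uncurry u)) (hux : ∀ t x, pdx u t x ≠ 0) (hsol : isGKN f u)
include hf hu hux hsol

theorem symmDet_pdx : symmDet f u (pdx u) := by
  intro t x
  have s₁ := contDiff_pdx hu
  have s₂ := contDiff_pdx s₁
  have s₃ := contDiff_pdx s₂
  have hrhs : pdx (pdt u) t x = pdx (pdx (pdx (pdx u))) t x
      - 3 / 2 * (2 * pdx (pdx u) t x * pdx (pdx (pdx u)) t x * pdx u t x
        - pdx (pdx u) t x ^ 2 * pdx (pdx u) t x) / pdx u t x ^ 2
      + (deriv f (u t x) * pdx u t x * pdx u t x - f (u t x) * pdx (pdx u) t x)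
        / pdx u t x ^ 2 := by
    have h := HasDerivAt.gknRhs (v := u t) (hf (u t x)).hasDerivAt
      (hasDerivAt_pdx (hu.differentiable (by simp)) t x)
      (hasDerivAt_pdx (s₁.differentiable (by simp)) t x)
      (hasDerivAt_pdx (s₂.differentiable (by simp)) t x)
      (hasDerivAt_pdx (s₃.differentiable (by simp)) t x) (hux t x)
    rw [← funext (hsol t)] at h
    exact h.deriv
  have hux₀ := hux t x
  rw [pdt_pdx_comm hu, hrhs]
  field_simp
  ring

theorem symmDet_pdt : symmDet f u (pdt u) := by
  intro t x
  have s₁ := contDiff_pdx hu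
  have s₂ := contDiff_pdx s₁
  have s₃ := contDiff_pdx s₂
  have hrhs : pdt (pdt u) t x = pdx (pdx (pdx (pdt u))) t x
      - 3 / 2 * (2 * pdx (pdx u) t x * pdx (pdx (pdt u)) t x * pdx u t x
        - pdx (pdx u) t x ^ 2 * pdx (pdt u) t x) / pdx u t x ^ 2
      + (deriv f (u t x) * pdt u t x * pdx u t x - f (u t x) * pdx (pdt u) t x)
        / pdx u t x ^ 2 := by
    have h := HasDerivAt.gknRhs (v := fun s => u s x) (hf (u t x)).hasDerivAt
      (hasDerivAt_pdt (hu.differentiable (by simp)) t x)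
      (hasDerivAt_pdt (s₁.differentiable (by simp)) t x)
      (hasDerivAt_pdt (s₂.differentiable (by simp)) t x)
      (hasDerivAt_pdt (s₃.differentiable (by simp)) t x) (hux t x)
    rw [← funext fun s => hsol s x] at h
    simp only [pdt_pdx_comm hu, pdt_pdx_comm s₁, pdt_pdx_comm s₂] at h
    exact h.deriv
  have hux₀ := hux t x
  rw [hrhs]
  field_simp
  ring

end TranslationSymmetries

/-- The characteristic `η - τ u_t - ξ u_x` of `X₃ₐ = -3at ∂_t - ax ∂_x + ∂_u`. -/
noncomputable def x3aChar (a : ℝ) (u : ℝ → ℝ → ℝ) : ℝ → ℝ → ℝ :=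
  fun t x => 1 + 3 * a * t * pdt u t x + a * x * pdx u t x

section X3aCharacteristic

variable (a : ℝ) {u : ℝ → ℝ → ℝ} (hu : ContDiff ℝ ∞ (uncurry u))
include hu

theorem pdt_x3aChar : pdt (x3aChar a u)
    = fun t x => 3 * a * pdt u t x + 3 * a * t * pdt (pdt u) t x + a * x * pdt (pdx u) t x := by
  funext t x
  have dut := hasDerivAt_pdt ((contDiff_pdt hu).differentiable (by simp)) t x
  have dux := hasDerivAt_pdt ((contDiff_pdx hu).differentiable (by simp)) t x
  exact ((((hasDerivAt_const t 1).add (((hasDerivAt_id' t).const_mul (3 * a)).mul dut)).add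
    (dux.const_mul (a * x))).congr_deriv (by ring)).deriv

theorem pdx_x3aChar : pdx (x3aChar a u)
    = fun t x => 3 * a * t * pdx (pdt u) t x + a * pdx u t x + a * x * pdx (pdx u) t x := by
  funext t x
  have dut := hasDerivAt_pdx ((contDiff_pdt hu).differentiable (by simp)) t x
  have dux := hasDerivAt_pdx ((contDiff_pdx hu).differentiable (by simp)) t x
  exact ((((hasDerivAt_const x 1).add (dut.const_mul (3 * a * t))).add
    (((hasDerivAt_id' x).const_mul a).mul dux)).congr_deriv (by ring)).deriv

theorem pdx_pdx_x3aChar : pdx (pdx (x3aChar a u))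
    = fun t x => 3 * a * t * pdx (pdx (pdt u)) t x + 2 * a * pdx (pdx u) t x
        + a * x * pdx (pdx (pdx u)) t x := by
  rw [pdx_x3aChar a hu]
  funext t x
  have dutx := hasDerivAt_pdx ((contDiff_pdx (contDiff_pdt hu)).differentiable (by simp)) t x
  have dux := hasDerivAt_pdx ((contDiff_pdx hu).differentiable (by simp)) t x
  have duxx := hasDerivAt_pdx ((contDiff_pdx (contDiff_pdx hu)).differentiable (by simp)) t x
  exact ((((dutx.const_mul (3 * a * t)).add (dux.const_mul a)).add
    (((hasDerivAt_id' x).const_mul a).mul duxx)).congr_deriv (by ring)).deriv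

theorem pdx_pdx_pdx_x3aChar : pdx (pdx (pdx (x3aChar a u)))
    = fun t x => 3 * a * t * pdx (pdx (pdx (pdt u))) t x + 3 * a * pdx (pdx (pdx u)) t x
        + a * x * pdx (pdx (pdx (pdx u))) t x := by
  rw [pdx_pdx_x3aChar a hu]
  funext t x
  have hu₂ := contDiff_pdx (contDiff_pdx hu)
  have dutxx := hasDerivAt_pdx
    ((contDiff_pdx (contDiff_pdx (contDiff_pdt hu))).differentiable (by simp)) t x
  have duxx := hasDerivAt_pdx (hu₂.differentiable (by simp)) t x
  have duxxx := hasDerivAt_pdx ((contDiff_pdx hu₂).differentiable (by simp)) t x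
  exact ((((dutxx.const_mul (3 * a * t)).add (duxx.const_mul (2 * a))).add
    (((hasDerivAt_id' x).const_mul a).mul duxxx)).congr_deriv (by ring)).deriv

end X3aCharacteristic

theorem gKN_point_symmetry_X3a_general (C a : ℝ)
    (u : ℝ → ℝ → ℝ) (hu : ContDiff ℝ (⊤ : ℕ∞) (Function.uncurry u))
    (hux : ∀ t x, pdx u t x ≠ 0)
    (hsol : isGKN (fun v => C * Real.exp (4 * a * v)) u) :
    symmDet (fun v => C * Real.exp (4 * a * v)) u
      (fun t x => 1 + 3 * a * t * pdt u t x + a * x * pdx u t x) := by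
  set f := fun v : ℝ => C * Real.exp (4 * a * v)
  have hf : Differentiable ℝ f := by fun_prop
  have hf' : ∀ v, deriv f v = 4 * a * f v := fun v =>
    ((((hasDerivAt_id' v).const_mul (4 * a)).exp.const_mul C).congr_deriv (by ring)).deriv
  show symmDet f u (x3aChar a u)
  intro t x
  have hLt := symmDet_pdt hf hu hux hsol t x
  have hLx := symmDet_pdx hf hu hux hsol t x
  have hux₀ := hux t x
  rw [hf'] at hLt hLx ⊢
  rw [pdx_pdx_pdx_x3aChar a hu, pdx_pdx_x3aChar a hu, pdx_x3aChar a hu, pdt_x3aChar a hu, x3aChar]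
  linear_combination (norm := skip) (3 * a * t) * hLt + (a * x) * hLx + (3 * a) * hsol t x
  field_simp
  ring

/-- Point symmetry `X₃ₐ = -3at ∂_t - ax ∂_x + ∂_u` of the gKN equation with
`f(u) = C exp(4au)`: its characteristic `P = 1 + 3at u_t + ax u_x` satisfies the
symmetry determining equation. -/
theorem gKN_point_symmetry_X3a (C a : ℝ) (hC : C ≠ 0) (ha : a ≠ 0)
    (u : ℝ → ℝ → ℝ) (hu : ContDiff ℝ (⊤ : ℕ∞) (Function.uncurry u))
    (hux : ∀ t x, pdx u t x ≠ 0)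
    (hsol : isGKN (fun v => C * Real.exp (4 * a * v)) u) :
    symmDet (fun v => C * Real.exp (4 * a * v)) u
      (fun t x => 1 + 3 * a * t * pdt u t x + a * x * pdx u t x) :=
  gKN_point_symmetry_X3a_general C a u hu hux hsol
end

section
/- Let C ≠ 0 and b be real constants and set f(u) = C·(u+b)⁴. Let u(t,x) be a smooth real-valued solution of the gKN equation with f, such that u_x(t,x) ≠ 0 for all (t,x). Then the function P(t,x) = (u(t,x)+b)² satisfies the symmetry determining equation ∂_t P − ∂_x³ P + 3(u_xx/u_x)∂_x² P − (3/2)(u_xx²/u_x²)∂_x P + (f(u)/u_x²)∂_x P − (f'(u)/u_x)P = 0 at every point (t,x). (This is the extra point symmetry X_{4f} = (u+b)²∂_u admitted by the gKN equation in the case f(u) = C(u+b)⁴.) -/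
open Real

/-! For a characteristic `P = η(u)` the chain rule expresses `P_t, P_x, P_xx, P_xxx` through
`η', η'', η'''` and `u_t, u_x, u_xx, u_xxx`; after eliminating `u_t` by the equation, all terms in
`u_xx` and `u_xxx` cancel and the determining expression collapses to
`(2 η' f - η f') / u_x - η''' u_x³`. For `η = (u + b)²` and `f = C (u + b)⁴` both parts vanish:
`η''' = 0` and `2 η' f = 4 C (u + b)⁵ = η f'`. -/

section ChainRule
variable {η g : ℝ → ℝ}

theorem hasDerivAt_comp_of_differentiable (hη : Differentiable ℝ η) (hg : Differentiable ℝ g)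
    (y : ℝ) : HasDerivAt (fun y => η (g y)) (deriv η (g y) * deriv g y) y :=
  (hη _).hasDerivAt.comp y (hg y).hasDerivAt

theorem deriv_fun_comp_eq (hη : Differentiable ℝ η) (hg : Differentiable ℝ g) :
    deriv (fun y => η (g y)) = fun y => deriv η (g y) * deriv g y :=
  funext fun y => (hasDerivAt_comp_of_differentiable hη hg y).deriv

theorem deriv_deriv_comp (hη : ContDiff ℝ 2 η) (hg : ContDiff ℝ 2 g) :
    deriv (deriv fun y => η (g y)) = fun y =>
      deriv (deriv η) (g y) * deriv g y ^ 2 + deriv η (g y) * deriv (deriv g) y := by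
  have hg1 : Differentiable ℝ g := hg.differentiable (by norm_num)
  rw [deriv_fun_comp_eq (hη.differentiable (by norm_num)) hg1]
  funext y
  have := (hasDerivAt_comp_of_differentiable hη.differentiable_deriv_two hg1 y).fun_mul
    (hg.differentiable_deriv_two y).hasDerivAt
  rw [this.deriv]
  ring

theorem deriv_deriv_deriv_comp (hη : ContDiff ℝ 3 η) (hg : ContDiff ℝ 3 g) :
    deriv (deriv (deriv fun y => η (g y))) = fun y =>
      deriv (deriv (deriv η)) (g y) * deriv g y ^ 3
        + 3 * deriv (deriv η) (g y) * deriv g y * deriv (deriv g) y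
        + deriv η (g y) * deriv (deriv (deriv g)) y := by
  have hg1 : Differentiable ℝ g := hg.differentiable (by norm_num)
  have hη' : ContDiff ℝ 2 (deriv η) := hη.deriv' (n := 2)
  have hg' : ContDiff ℝ 2 (deriv g) := hg.deriv' (n := 2)
  rw [deriv_deriv_comp (hη.of_le (by norm_num)) (hg.of_le (by norm_num))]
  funext y
  have := ((hasDerivAt_comp_of_differentiable hη'.differentiable_deriv_two hg1 y).fun_mul
    (((hg'.differentiable (by norm_num)) y).hasDerivAt.fun_pow 2)).fun_add
    ((hasDerivAt_comp_of_differentiable (hη'.differentiable (by norm_num)) hg1 y).fun_mul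
      (hg'.differentiable_deriv_two y).hasDerivAt)
  rw [this.deriv]
  push_cast
  ring

end ChainRule

theorem pdx_eq_deriv (u : ℝ → ℝ → ℝ) (t : ℝ) : pdx u t = deriv (u t) := rfl

theorem pdt_comp {η : ℝ → ℝ} {u : ℝ → ℝ → ℝ} (t x : ℝ) (hη : Differentiable ℝ η)
    (hu : Differentiable ℝ fun s => u s x) :
    pdt (fun t x => η (u t x)) t x = deriv η (u t x) * pdt u t x :=
  (hasDerivAt_comp_of_differentiable hη hu t).deriv

theorem symmDet_lhs_comp_eq {u₁ u₂ u₃ η₀ η₁ η₂ η₃ F F' : ℝ} (hu₁ : u₁ ≠ 0) :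
    η₁ * (u₃ - 3 / 2 * u₂ ^ 2 / u₁ + F / u₁)
      - (η₃ * u₁ ^ 3 + 3 * η₂ * u₁ * u₂ + η₁ * u₃)
      + 3 * (u₂ / u₁) * (η₂ * u₁ ^ 2 + η₁ * u₂)
      - 3 / 2 * (u₂ ^ 2 / u₁ ^ 2) * (η₁ * u₁)
      + F / u₁ ^ 2 * (η₁ * u₁)
      - F' / u₁ * η₀
      = (2 * η₁ * F - F' * η₀) / u₁ - η₃ * u₁ ^ 3 := by
  field_simp
  ring

theorem isGKN.symmDet_comp {f η : ℝ → ℝ} {u : ℝ → ℝ → ℝ} (hsol : isGKN f u)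
    (hu : ContDiff ℝ 3 (Function.uncurry u)) (hux : ∀ t x, pdx u t x ≠ 0)
    (hη : ContDiff ℝ 3 η) (hη₃ : ∀ v, deriv (deriv (deriv η)) v = 0)
    (hfη : ∀ v, 2 * deriv η v * f v = deriv f v * η v) :
    symmDet f u (fun t x => η (u t x)) := by
  intro t x
  have hslice_x : ContDiff ℝ 3 (u t) := hu.comp (contDiff_const.prodMk contDiff_id)
  have hslice_t : Differentiable ℝ fun s => u s x :=
    (hu.comp (contDiff_id.prodMk contDiff_const)).differentiable (by norm_num)
  have hη₁ : Differentiable ℝ η := hη.differentiable (by norm_num)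
  rw [pdt_comp t x hη₁ hslice_t, hsol t x]
  simp only [pdx_eq_deriv] at hux ⊢
  rw [deriv_deriv_deriv_comp hη hslice_x,
    deriv_deriv_comp (hη.of_le (by norm_num)) (hslice_x.of_le (by norm_num)),
    deriv_fun_comp_eq hη₁ (hslice_x.differentiable (by norm_num)),
    symmDet_lhs_comp_eq (hux t x), hη₃, hfη]
  ring

theorem gKN_point_symmetry_X4f_general (C b : ℝ)
    (u : ℝ → ℝ → ℝ) (hu : ContDiff ℝ (⊤ : ℕ∞) (Function.uncurry u))
    (hux : ∀ t x, pdx u t x ≠ 0)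
    (hsol : isGKN (fun v => C * (v + b)^4) u) :
    symmDet (fun v => C * (v + b)^4) u (fun t x => (u t x + b)^2) := by
  have hη₁ : deriv (fun v => (v + b) ^ 2) = fun v => 2 * (v + b) :=
    funext fun v => (((hasDerivAt_id' v).add_const b).fun_pow 2).deriv.trans (by norm_num)
  have hf₁ : deriv (fun v => C * (v + b) ^ 4) = fun v => 4 * C * (v + b) ^ 3 :=
    funext fun v =>
      ((((hasDerivAt_id' v).add_const b).fun_pow 4).const_mul C).deriv.trans (by norm_num; ring)
  refine hsol.symmDet_comp (η := fun v => (v + b) ^ 2)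
    (hu.of_le (WithTop.coe_le_coe.mpr le_top)) hux (by fun_prop) (fun v => ?_) (fun v => ?_)
  · simp [hη₁]
  · rw [hη₁, hf₁]; ring

/-- Extra point symmetry `X₄f = (u+b)² ∂_u` of the gKN equation with `f(u) = C (u+b)⁴`:
its characteristic `P = (u+b)²` satisfies the symmetry determining equation. -/
theorem gKN_point_symmetry_X4f (C b : ℝ) (hC : C ≠ 0)
    (u : ℝ → ℝ → ℝ) (hu : ContDiff ℝ (⊤ : ℕ∞) (Function.uncurry u))
    (hux : ∀ t x, pdx u t x ≠ 0)
    (hsol : isGKN (fun v => C * (v + b)^4) u) :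
    symmDet (fun v => C * (v + b)^4) u (fun t x => (u t x + b)^2) :=
  gKN_point_symmetry_X4f_general C b u hu hux hsol
end

section
/- Let f be a smooth real function and let u : ℝ → ℝ be a smooth function with u'(x) ≠ 0 for all x. Set Q₁ = u''''/u'² − 4·u'''·u''/u'³ + 3·u''³/u'⁴ − 2·u''·f(u)/u'⁴ + f'(u)/u'² and R = u''' − (3/2)·u''²/u' + f(u)/u' (the right-hand side of the gKN equation). Then at every x, u'(x)·Q₁(x) = (d/dx)[ R(x)/u'(x) ]. (Consequently u_t = R = u_x·D_x⁻¹(u_x·Q₁), i.e., the gKN equation is Hamiltonian with Hamiltonian operator H = u_x D_x⁻¹ u_x and Hamiltonian density H₁ = (1/2)u_xx²/u_x² + (1/3)f(u)/u_x².) -/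
/-! Computing `(R/u')'` by the quotient and chain rules expresses it as a rational function of
`u', u'', u''', u''''`, `f(u)` and `f'(u)`; that function is `u' · Q₁`. -/

open Real

theorem ContDiff.hasDerivAt_iterate_deriv {𝕜 F : Type*} [NontriviallyNormedField 𝕜]
    [NormedAddCommGroup F] [NormedSpace 𝕜 F] {f : 𝕜 → F} (hf : ContDiff 𝕜 (⊤ : ℕ∞) f)
    (n : ℕ) (x : 𝕜) : HasDerivAt (deriv^[n] f) (deriv^[n + 1] f x) x := by
  rw [Function.iterate_succ_apply']
  exact ((hf.iterate_deriv n).differentiable (by simp) x).hasDerivAt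

section gKN

-- `p, q, r, s` play the roles of `u', u'', u''', u''''`, and `g` that of `f ∘ u`.

variable {p q r g : ℝ → ℝ} {s g' x : ℝ}

theorem hasDerivAt_gKN_rhs (hp : HasDerivAt p (q x) x) (hq : HasDerivAt q (r x) x)
    (hr : HasDerivAt r s x) (hg : HasDerivAt g g' x) (hp0 : p x ≠ 0) :
    HasDerivAt (fun y => r y - (3/2) * q y ^ 2 / p y + g y / p y)
      (s - 3 * q x * r x / p x + (3/2) * q x ^ 3 / p x ^ 2 + g' / p x
        - g x * q x / p x ^ 2) x := by
  have hsq := ((hq.fun_pow 2).const_mul (3/2 : ℝ)).fun_div hp hp0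
  refine ((hr.fun_sub hsq).fun_add (hg.fun_div hp hp0)).congr_deriv ?_
  field_simp
  ring

theorem hasDerivAt_gKN_rhs_div_deriv (hp : HasDerivAt p (q x) x) (hq : HasDerivAt q (r x) x)
    (hr : HasDerivAt r s x) (hg : HasDerivAt g g' x) (hp0 : p x ≠ 0) :
    HasDerivAt (fun y => (r y - (3/2) * q y ^ 2 / p y + g y / p y) / p y)
      (s / p x - 4 * r x * q x / p x ^ 2 + 3 * q x ^ 3 / p x ^ 3
        - 2 * q x * g x / p x ^ 3 + g' / p x ^ 2) x := by
  refine ((hasDerivAt_gKN_rhs hp hq hr hg hp0).fun_div hp hp0).congr_deriv ?_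
  field_simp
  ring

end gKN

/-- The gKN right-hand side `R = u''' - (3/2) u''²/u' + f(u)/u'` satisfies
`u' · Q₁ = (R/u')'`, i.e. the gKN equation is Hamiltonian with operator
`u_x D_x⁻¹ u_x` and density `H₁`. -/
theorem gKN_hamiltonian_structure (f : ℝ → ℝ) (hf : ContDiff ℝ (⊤ : ℕ∞) f)
    (u : ℝ → ℝ) (hu : ContDiff ℝ (⊤ : ℕ∞) u) (hux : ∀ x, deriv u x ≠ 0) :
    ∀ x,
      deriv u x *
        (deriv (deriv (deriv (deriv u))) x / (deriv u x)^2
          - 4 * deriv (deriv (deriv u)) x * deriv (deriv u) x / (deriv u x)^3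
          + 3 * (deriv (deriv u) x)^3 / (deriv u x)^4
          - 2 * deriv (deriv u) x * f (u x) / (deriv u x)^4
          + deriv f (u x) / (deriv u x)^2)
      = deriv (fun y =>
          (deriv (deriv (deriv u)) y - (3/2) * (deriv (deriv u) y)^2 / deriv u y
            + f (u y) / deriv u y) / deriv u y) x := by
  intro x
  have h1 : HasDerivAt (deriv u) (deriv (deriv u) x) x :=
    ContDiff.hasDerivAt_iterate_deriv hu 1 x
  have h2 : HasDerivAt (deriv (deriv u)) (deriv (deriv (deriv u)) x) x :=
    ContDiff.hasDerivAt_iterate_deriv hu 2 x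
  have h3 : HasDerivAt (deriv (deriv (deriv u))) (deriv (deriv (deriv (deriv u))) x) x :=
    ContDiff.hasDerivAt_iterate_deriv hu 3 x
  have hfu : HasDerivAt (fun y => f (u y)) (deriv f (u x) * deriv u x) x :=
    (hf.differentiable (by simp) (u x)).hasDerivAt.comp x (hu.differentiable (by simp) x).hasDerivAt
  rw [(hasDerivAt_gKN_rhs_div_deriv h1 h2 h3 hfu (hux x)).deriv]
  have hux₀ := hux x
  field_simp
end

section
/- Let f : ℝ → ℝ be a smooth function with f(u) > 0 for all u. Then f satisfies 4·f(u)²·f'''(u) − 6·f(u)·f'(u)·f''(u) + 3·f'(u)³ = 0 for all u ∈ ℝ if and only if there exist real constants C₁, C₂, C₃ such that f(u) = (C₁u² + C₂u + C₃)² for all u ∈ ℝ. (Equivalently: a positive smooth f is the square of a quadratic polynomial iff 4f²f''' − 6ff'f'' + 3f'³ = 0.) -/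
/-!
Writing a positive `f` as `g ^ 2` with `g = √f`, the chain rule gives
`4 f² f''' - 6 f f' f'' + 3 f'³ = 8 g⁵ g'''`: all terms in `g'`, `g''` cancel. Since `g > 0`,
the equation says exactly that `g''' = 0`, i.e. that `g` is a quadratic polynomial.
-/

open Real

noncomputable def quadraticSquareDefect (f : ℝ → ℝ) (u : ℝ) : ℝ :=
  4 * f u ^ 2 * deriv (deriv (deriv f)) u - 6 * f u * deriv f u * deriv (deriv f) u
    + 3 * deriv f u ^ 3

theorem exists_eq_add_of_hasDerivAt_deriv {𝕜 F : Type*} [RCLike 𝕜] [NormedAddCommGroup F]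
    [NormedSpace 𝕜 F] {f p : 𝕜 → F} (hf : Differentiable 𝕜 f)
    (hp : ∀ x, HasDerivAt p (deriv f x) x) : ∃ c, ∀ x, f x = p x + c :=
  ⟨f 0 - p 0, fun x => eq_add_of_sub_eq' <| is_const_of_deriv_eq_zero
    (hf.sub fun x => (hp x).differentiableAt)
    (fun x => ((hf x).hasDerivAt.sub (hp x)).deriv.trans (sub_self _)) x 0⟩

section

variable {g : ℝ → ℝ}

theorem quadraticSquareDefect_sq (hg : ContDiff ℝ 3 g) (u : ℝ) :
    quadraticSquareDefect (fun x => g x ^ 2) u = 8 * g u ^ 5 * deriv (deriv (deriv g)) u := by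
  have hg₀ : Differentiable ℝ g := hg.differentiable (by norm_num)
  have hg₁ : Differentiable ℝ (deriv g) := by
    simpa using hg.differentiable_iteratedDeriv 1 (by norm_num)
  have hg₂ : Differentiable ℝ (deriv (deriv g)) := by
    simpa [iteratedDeriv_eq_iterate] using hg.differentiable_iteratedDeriv 2 (by norm_num)
  have d₁ : deriv (fun x => g x ^ 2) = fun x => 2 * g x * deriv g x := by
    ext x; simp [hg₀ x]
  have d₂ : deriv (fun x => 2 * g x * deriv g x) =
      fun x => 2 * deriv g x ^ 2 + 2 * g x * deriv (deriv g) x := by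
    ext x
    exact (((hg₀ x).hasDerivAt.const_mul 2).mul (hg₁ x).hasDerivAt).deriv.trans (by ring)
  have d₃ : deriv (fun x => 2 * deriv g x ^ 2 + 2 * g x * deriv (deriv g) x) =
      fun x => 6 * deriv g x * deriv (deriv g) x + 2 * g x * deriv (deriv (deriv g)) x := by
    ext x
    exact ((((hg₁ x).hasDerivAt.pow 2).const_mul 2).add
      (((hg₀ x).hasDerivAt.const_mul 2).mul (hg₂ x).hasDerivAt)).deriv.trans
      (by push_cast; ring)
  simp only [quadraticSquareDefect, d₁, d₂, d₃]
  ring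

theorem exists_quadratic_of_deriv_deriv_deriv_eq_zero (hg : ContDiff ℝ 3 g)
    (h : ∀ x, deriv (deriv (deriv g)) x = 0) : ∃ a b c, ∀ x, g x = a * x ^ 2 + b * x + c := by
  have hg₀ : Differentiable ℝ g := hg.differentiable (by norm_num)
  have hg₁ : Differentiable ℝ (deriv g) := by
    simpa using hg.differentiable_iteratedDeriv 1 (by norm_num)
  have hg₂ : Differentiable ℝ (deriv (deriv g)) := by
    simpa [iteratedDeriv_eq_iterate] using hg.differentiable_iteratedDeriv 2 (by norm_num)
  have ha (x : ℝ) : deriv (deriv g) x = deriv (deriv g) 0 := is_const_of_deriv_eq_zero hg₂ h x 0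
  obtain ⟨b, hb⟩ := exists_eq_add_of_hasDerivAt_deriv hg₁ fun x =>
    ((hasDerivAt_id' x).const_mul (deriv (deriv g) 0)).congr_deriv (by rw [ha x, mul_one])
  obtain ⟨c, hc⟩ := exists_eq_add_of_hasDerivAt_deriv hg₀ fun x =>
    (((hasDerivAt_pow 2 x).const_mul (deriv (deriv g) 0 / 2)).add
      ((hasDerivAt_id' x).const_mul b)).congr_deriv (by rw [hb x]; push_cast; ring)
  exact ⟨deriv (deriv g) 0 / 2, b, c, hc⟩

end

theorem deriv_deriv_deriv_quadratic (a b c x : ℝ) :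
    deriv (deriv (deriv (fun x => a * x ^ 2 + b * x + c))) x = 0 := by
  have d₁ : deriv (fun x => a * x ^ 2 + b * x + c) = fun x => 2 * a * x + b := by
    ext x
    exact ((((hasDerivAt_pow 2 x).const_mul a).add ((hasDerivAt_id' x).const_mul b)).add_const
      c).deriv.trans (by push_cast; ring)
  have d₂ : deriv (fun x => 2 * a * x + b) = fun _ => 2 * a := by
    ext x; simp
  simp [d₁, d₂]

/-- A positive smooth function `f` is the square of a quadratic polynomial iff
`4 f² f''' - 6 f f' f'' + 3 f'³ = 0`. -/
theorem square_of_quadratic_iff (f : ℝ → ℝ) (hf : ContDiff ℝ (⊤ : ℕ∞) f)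
    (hpos : ∀ u, 0 < f u) :
    (∀ u, 4 * (f u)^2 * deriv (deriv (deriv f)) u
        - 6 * f u * deriv f u * deriv (deriv f) u + 3 * (deriv f u)^3 = 0)
    ↔ ∃ C₁ C₂ C₃ : ℝ, ∀ u, f u = (C₁ * u^2 + C₂ * u + C₃)^2 := by
  change (∀ u, quadraticSquareDefect f u = 0) ↔ _
  constructor
  · intro hode
    set g : ℝ → ℝ := fun u => √(f u)
    have hg : ContDiff ℝ 3 g := (hf.sqrt fun u => (hpos u).ne').of_le (by norm_cast)
    have hfg : f = fun u => g u ^ 2 := funext fun u => (sq_sqrt (hpos u).le).symm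
    have hg₃ (u : ℝ) : deriv (deriv (deriv g)) u = 0 := by
      have hdefect := quadraticSquareDefect_sq hg u
      rw [← hfg, hode u] at hdefect
      have : g u ≠ 0 := (sqrt_pos.mpr (hpos u)).ne'
      simpa [this] using hdefect.symm
    obtain ⟨a, b, c, hq⟩ := exists_quadratic_of_deriv_deriv_deriv_eq_zero hg hg₃
    exact ⟨a, b, c, fun u => by rw [hfg, ← hq]⟩
  · rintro ⟨C₁, C₂, C₃, hq⟩ u
    have hdefect := quadraticSquareDefect_sq (g := fun u => C₁ * u ^ 2 + C₂ * u + C₃)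
      (by fun_prop) u
    rwa [← funext hq, deriv_deriv_deriv_quadratic, mul_zero] at hdefect
end
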